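/- arXiv:2406.12763 — 4 statements merged into one kernel-verified Lean document; each statement's English description precedes it below -/
import Mathlib

section
/- Let ℓ : ℝ → ℝ be convex, differentiable, strictly decreasing with ℓ > 0, and let ℓ⁻¹ denote its inverse on its range. For vectors z₁,…,zₙ ∈ ℝ and any index i₀, the quantity q_{i₀} = ℓ'(z_{i₀}) / ℓ'(ℓ⁻¹(∑ᵢ ℓ(zᵢ))) satisfies 0 < q_{i₀} ≤ 1. -/
theorem stmt1 {n : ℕ} (ℓ linv : ℝ → ℝ)
    (hconv : ConvexOn ℝ Set.univ ℓ)
    (hdiff : Differentiable ℝ ℓ)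
    (hanti : StrictAnti ℓ)
    (hpos : ∀ z, 0 < ℓ z)
    (hderiv : ∀ z, deriv ℓ z < 0)
    (hlinv : ∀ y : ℝ, 0 < y → ℓ (linv y) = y)
    (z : Fin n → ℝ) (i₀ : Fin n) :
    0 < deriv ℓ (z i₀) / deriv ℓ (linv (∑ i, ℓ (z i))) ∧
      deriv ℓ (z i₀) / deriv ℓ (linv (∑ i, ℓ (z i))) ≤ 1 := by
  set S := ∑ i, ℓ (z i) with hS
  have hSpos : 0 < S := Finset.sum_pos (fun i _ => hpos (z i)) ⟨i₀, Finset.mem_univ i₀⟩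
  have hℓS : ℓ (linv S) = S := hlinv S hSpos
  have hle : ℓ (z i₀) ≤ ℓ (linv S) := by
    rw [hℓS]
    exact Finset.single_le_sum (fun i _ => (hpos (z i)).le) (Finset.mem_univ i₀)
  have hx : linv S ≤ z i₀ := by
    by_contra h
    exact absurd (hanti (lt_of_not_ge h)) (not_lt.mpr hle)
  have hmono : deriv ℓ (linv S) ≤ deriv ℓ (z i₀) :=
    hconv.monotoneOn_deriv (fun x _ => hdiff x) (Set.mem_univ _) (Set.mem_univ _) hx
  have h1 := hderiv (z i₀)
  have h2 := hderiv (linv S)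
  constructor
  · exact div_pos_of_neg_of_neg h1 h2
  · rw [div_le_one_of_neg h2]
    exact hmono
end

section
/- Let φ(β) = ∑ᵢ₌₁ᵈ (cosh(βᵢ) − 1) on ℝᵈ, and let ϕ⁻¹ denote the inverse of t ↦ cosh(t) − 1 on ℝ_{≥0}. Then for every β ∈ ℝᵈ with β ≠ 0, the limit lim_{η→0⁺} η · ϕ⁻¹(φ(β/η)) exists and equals max_i |βᵢ| (the ℓ∞ norm of β). -/
open Filter

theorem stmt6 {d : ℕ} (ϕinv : ℝ → ℝ)
    (hinv1 : ∀ t : ℝ, 0 ≤ t → ϕinv (Real.cosh t - 1) = t)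
    (hinv2 : ∀ s : ℝ, 0 ≤ s → 0 ≤ ϕinv s ∧ Real.cosh (ϕinv s) - 1 = s)
    (β : Fin d → ℝ) (hβ : β ≠ 0) :
    Tendsto (fun η : ℝ => η * ϕinv (∑ i, (Real.cosh (β i / η) - 1)))
      (nhdsWithin 0 (Set.Ioi 0)) (nhds (⨆ i, |β i|)) := by
  have hd : 0 < d := by
    rcases Nat.eq_zero_or_pos d with h | h
    · exact absurd (funext fun i => (h ▸ i).elim0) hβ
    · exact h
  haveI : Nonempty (Fin d) := ⟨⟨0, hd⟩⟩
  set M : ℝ := ⨆ i, |β i| with hM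
  obtain ⟨j, hj⟩ : ∃ j, |β j| = M := exists_eq_ciSup_of_finite
  have hMle : ∀ i, |β i| ≤ M := fun i => le_ciSup (f := fun i => |β i|) (Set.Finite.bddAbove (Set.finite_range _)) i
  have hM0 : 0 ≤ M := hj ▸ abs_nonneg _
  -- monotonicity of ϕinv
  have hmono : ∀ a b : ℝ, 0 ≤ a → a ≤ b → ϕinv a ≤ ϕinv b := by
    intro a b ha hab
    obtain ⟨ha1, ha2⟩ := hinv2 a ha
    obtain ⟨hb1, hb2⟩ := hinv2 b (ha.trans hab)
    have : Real.cosh (ϕinv a) ≤ Real.cosh (ϕinv b) := by linarith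
    rw [Real.cosh_le_cosh, abs_of_nonneg ha1, abs_of_nonneg hb1] at this
    exact this
  set L : ℝ := Real.log (2 * d) with hL
  have hL0 : 0 ≤ L := Real.log_nonneg (by
    have : (1 : ℝ) ≤ d := by exact_mod_cast hd
    linarith)
  -- bounds for η > 0
  have key : ∀ η : ℝ, 0 < η →
      M ≤ η * ϕinv (∑ i, (Real.cosh (β i / η) - 1)) ∧
      η * ϕinv (∑ i, (Real.cosh (β i / η) - 1)) ≤ M + η * L := by
    intro η hη
    set S : ℝ := ∑ i, (Real.cosh (β i / η) - 1) with hS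
    have hterm0 : ∀ i : Fin d, (0:ℝ) ≤ Real.cosh (β i / η) - 1 := fun i => by
      have := Real.one_le_cosh (β i / η); linarith
    have hS0 : 0 ≤ S := Finset.sum_nonneg fun i _ => hterm0 i
    have hMη0 : 0 ≤ M / η := div_nonneg hM0 hη.le
    -- lower: cosh (M/η) - 1 ≤ S
    have hlow : Real.cosh (M / η) - 1 ≤ S := by
      have h1 : Real.cosh (β j / η) - 1 = Real.cosh (M / η) - 1 := by
        rw [← Real.cosh_abs (β j / η), abs_div, hj, abs_of_pos hη]
      calc Real.cosh (M / η) - 1 = Real.cosh (β j / η) - 1 := h1.symm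
        _ ≤ S := Finset.single_le_sum (fun i _ => hterm0 i) (Finset.mem_univ j)
    -- upper: S ≤ cosh (M/η + L) - 1
    have hup : S ≤ Real.cosh (M / η + L) - 1 := by
      have h1 : S ≤ d * (Real.cosh (M / η) - 1) := by
        calc S ≤ ∑ _i : Fin d, (Real.cosh (M / η) - 1) := by
              apply Finset.sum_le_sum
              intro i _
              have : Real.cosh (β i / η) ≤ Real.cosh (M / η) := by
                rw [Real.cosh_le_cosh, abs_div, abs_of_pos hη, abs_of_nonneg hMη0]
                gcongr; exact hMle i
              linarith
          _ = d * (Real.cosh (M / η) - 1) := by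
              rw [Finset.sum_const, Finset.card_univ, Fintype.card_fin, nsmul_eq_mul]
      have h2 : (d:ℝ) * (Real.cosh (M / η) - 1) ≤ Real.cosh (M / η + L) - 1 := by
        have hd1 : (1:ℝ) ≤ d := by exact_mod_cast hd
        have hch : Real.cosh (M / η) ≤ Real.exp (M / η) := by
          rw [Real.cosh_eq]
          have := Real.exp_le_exp.mpr (neg_le_self hMη0)
          linarith
        have hch2 : (d:ℝ) * Real.exp (M / η) ≤ Real.cosh (M / η + L) := by
          rw [Real.cosh_eq, Real.exp_add, hL, Real.exp_log (by positivity)]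
          have := Real.exp_pos (-(M / η + Real.log (2 * d)))
          have := Real.exp_pos (M / η)
          nlinarith
        have hexp := Real.exp_pos (M / η)
        nlinarith
      linarith
    -- conclude
    obtain ⟨hi0, _⟩ := hinv2 S hS0
    have hlowinv : M / η ≤ ϕinv S := by
      have := hmono (Real.cosh (M / η) - 1)  S (by have := Real.one_le_cosh (M/η); linarith) hlow
      rwa [hinv1 _ hMη0] at this
    have hupinv : ϕinv S ≤ M / η + L := by
      have := hmono S (Real.cosh (M / η + L) - 1) hS0 hup
      rwa [hinv1 _ (by linarith)] at this
    constructor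
    · calc M = η * (M / η) := by field_simp
        _ ≤ η * ϕinv S := by nlinarith
    · calc η * ϕinv S ≤ η * (M / η + L) := by nlinarith
        _ = M + η * L := by field_simp
  apply tendsto_of_tendsto_of_tendsto_of_le_of_le'
    (g := fun _ : ℝ => M) (h := fun η : ℝ => M + η * L)
  · exact tendsto_const_nhds
  · have : Tendsto (fun η : ℝ => M + η * L) (nhds 0) (nhds (M + 0 * L)) := by
      exact (continuous_const.add (continuous_id.mul continuous_const)).tendsto 0
    simpa using this.mono_left nhdsWithin_le_nhds
  · filter_upwards [self_mem_nhdsWithin] with η hη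
    exact (key η hη).1
  · filter_upwards [self_mem_nhdsWithin] with η hη
    exact (key η hη).2
end

section
/- Let ϕ(t) = t·arcsinh(t) − √(t²+1) + 1 for t ∈ ℝ and φ(β) = ∑ᵢ ϕ(βᵢ) on ℝᵈ. Then for every β ≠ 0, lim_{η→0⁺} η · ϕ⁻¹(φ(β/η)) = ∑ᵢ |βᵢ| (the ℓ₁ norm of β), where ϕ⁻¹ is the inverse of ϕ on ℝ_{≥0}. -/
open Filter Real

/-!
Put `cᵢ = |βᵢ| / ‖β‖₁` and `t = ‖β‖₁ / η`, so that `φ(β / η) = ∑ ϕ(cᵢ t)` by evenness of `ϕ`, and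
let `u = ϕ⁻¹(∑ ϕ(cᵢ t))`. Since `ϕ` is convex with `ϕ 0 = 0`, `∑ ϕ(cᵢ t) ≤ ∑ cᵢ ϕ(t) = ϕ t`, so
`u ≤ t`. Conversely `t arsinh t - t ≤ ϕ t ≤ t arsinh t` and `arsinh (c t) ≥ arsinh t + log c` give
`∑ ϕ(cᵢ t) ≥ t arsinh t - (H + 1) t` with `H` the Shannon entropy of `c`; together with
`ϕ u ≤ u arsinh u ≤ u arsinh t` this yields `u / t ≥ 1 - (H + 1) / arsinh t → 1`.
-/

namespace Real

theorem tendsto_arsinh_atTop : Tendsto arsinh atTop atTop :=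
  arsinh_strictMono.monotone.tendsto_atTop_atTop fun b => ⟨sinh b, (arsinh_sinh b).ge⟩

theorem arsinh_add_log_le_arsinh_mul {c : ℝ} (hc0 : 0 < c) (hc1 : c ≤ 1) (x : ℝ) :
    arsinh x + log c ≤ arsinh (c * x) := by
  have hsqrt : c * √(1 + x ^ 2) ≤ √(1 + (c * x) ^ 2) := by
    rw [mul_pow, ← sqrt_sq hc0.le, ← sqrt_mul (sq_nonneg c), sqrt_sq hc0.le]
    exact sqrt_le_sqrt (by nlinarith [sq_nonneg x, sq_nonneg c])
  rw [← le_sub_iff_add_le', log_le_iff_le_exp hc0, exp_sub, le_div_iff₀ (exp_pos _),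
    exp_arsinh, exp_arsinh]
  linarith

end Real

noncomputable def hyperbolicEntropy (t : ℝ) : ℝ := t * arsinh t - √(t ^ 2 + 1) + 1

theorem hasDerivAt_hyperbolicEntropy (t : ℝ) : HasDerivAt hyperbolicEntropy (arsinh t) t := by
  have hsqrt : HasDerivAt (fun x : ℝ => √(x ^ 2 + 1)) (2 * t / (2 * √(t ^ 2 + 1))) t :=
    (((hasDerivAt_pow 2 t).add_const 1).sqrt (by positivity)).congr_deriv (by ring)
  have hpos : 0 < √(t ^ 2 + 1) := by positivity
  refine HasDerivAt.congr_deriv (f := hyperbolicEntropy)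
    ((((hasDerivAt_id' t).mul (hasDerivAt_arsinh t)).sub hsqrt).add_const 1) ?_
  rw [add_comm 1 (t ^ 2)]
  field_simp
  ring

theorem deriv_hyperbolicEntropy : deriv hyperbolicEntropy = arsinh :=
  funext fun t => (hasDerivAt_hyperbolicEntropy t).deriv

theorem differentiable_hyperbolicEntropy : Differentiable ℝ hyperbolicEntropy :=
  fun t => (hasDerivAt_hyperbolicEntropy t).differentiableAt

theorem hyperbolicEntropy_zero : hyperbolicEntropy 0 = 0 := by simp [hyperbolicEntropy]

theorem hyperbolicEntropy_neg (t : ℝ) : hyperbolicEntropy (-t) = hyperbolicEntropy t := by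
  simp only [hyperbolicEntropy, arsinh_neg, neg_sq, neg_mul_neg]

theorem hyperbolicEntropy_abs (t : ℝ) : hyperbolicEntropy |t| = hyperbolicEntropy t := by
  rcases abs_choice t with h | h <;> rw [h]
  exact hyperbolicEntropy_neg t

theorem convexOn_hyperbolicEntropy : ConvexOn ℝ Set.univ hyperbolicEntropy :=
  Monotone.convexOn_univ_of_deriv differentiable_hyperbolicEntropy
    (deriv_hyperbolicEntropy ▸ arsinh_strictMono.monotone)

theorem strictMonoOn_hyperbolicEntropy : StrictMonoOn hyperbolicEntropy (Set.Ici 0) := by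
  refine strictMonoOn_of_deriv_pos (convex_Ici 0)
    differentiable_hyperbolicEntropy.continuous.continuousOn fun t ht => ?_
  rw [interior_Ici] at ht
  rw [deriv_hyperbolicEntropy]
  exact arsinh_pos_iff.2 ht

theorem hyperbolicEntropy_nonneg (t : ℝ) : 0 ≤ hyperbolicEntropy t := by
  rw [← hyperbolicEntropy_abs, ← hyperbolicEntropy_zero]
  exact strictMonoOn_hyperbolicEntropy.monotoneOn Set.self_mem_Ici (abs_nonneg t) (abs_nonneg t)

theorem hyperbolicEntropy_le_mul_arsinh (t : ℝ) : hyperbolicEntropy t ≤ t * arsinh t := by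
  have : 1 ≤ √(t ^ 2 + 1) := one_le_sqrt.2 (by nlinarith)
  unfold hyperbolicEntropy; linarith

theorem mul_arsinh_sub_le_hyperbolicEntropy {t : ℝ} (ht : 0 ≤ t) :
    t * arsinh t - t ≤ hyperbolicEntropy t := by
  have : √(t ^ 2 + 1) ≤ t + 1 := sqrt_le_iff.2 ⟨by linarith, by nlinarith⟩
  unfold hyperbolicEntropy; linarith

theorem hyperbolicEntropy_mul_le {c : ℝ} (hc0 : 0 ≤ c) (hc1 : c ≤ 1) (t : ℝ) :
    hyperbolicEntropy (c * t) ≤ c * hyperbolicEntropy t := by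
  simpa [hyperbolicEntropy_zero] using convexOn_hyperbolicEntropy.2 (Set.mem_univ t)
    (Set.mem_univ 0) hc0 (sub_nonneg.2 hc1) (add_sub_cancel c 1)

theorem le_hyperbolicEntropy_mul {c : ℝ} (hc0 : 0 ≤ c) (hc1 : c ≤ 1) {t : ℝ} (ht : 0 ≤ t) :
    c * (t * arsinh t) - (negMulLog c + c) * t ≤ hyperbolicEntropy (c * t) := by
  rcases hc0.eq_or_lt with rfl | hc0
  · simp [hyperbolicEntropy_zero]
  have harsinh := mul_le_mul_of_nonneg_left (arsinh_add_log_le_arsinh_mul hc0 hc1 t)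
    (mul_nonneg hc0.le ht)
  have hphi := mul_arsinh_sub_le_hyperbolicEntropy (mul_nonneg hc0.le ht)
  unfold negMulLog
  nlinarith

section WeightedSum

variable {ι : Type*} [Fintype ι] {c : ι → ℝ}

theorem le_one_of_sum_eq_one (hc0 : ∀ i, 0 ≤ c i) (hc1 : ∑ i, c i = 1) (i : ι) : c i ≤ 1 :=
  hc1 ▸ Finset.single_le_sum (fun j _ => hc0 j) (Finset.mem_univ i)

theorem sum_hyperbolicEntropy_mul_le (hc0 : ∀ i, 0 ≤ c i) (hc1 : ∑ i, c i = 1) (t : ℝ) :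
    ∑ i, hyperbolicEntropy (c i * t) ≤ hyperbolicEntropy t := by
  calc ∑ i, hyperbolicEntropy (c i * t)
      ≤ ∑ i, c i * hyperbolicEntropy t :=
        Finset.sum_le_sum fun i _ =>
          hyperbolicEntropy_mul_le (hc0 i) (le_one_of_sum_eq_one hc0 hc1 i) t
    _ = hyperbolicEntropy t := by rw [← Finset.sum_mul, hc1, one_mul]

theorem le_sum_hyperbolicEntropy_mul (hc0 : ∀ i, 0 ≤ c i) (hc1 : ∑ i, c i = 1) {t : ℝ}
    (ht : 0 ≤ t) :
    t * arsinh t - (∑ i, negMulLog (c i) + 1) * t ≤ ∑ i, hyperbolicEntropy (c i * t) := by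
  calc t * arsinh t - (∑ i, negMulLog (c i) + 1) * t
      = ∑ i, (c i * (t * arsinh t) - (negMulLog (c i) + c i) * t) := by
        rw [Finset.sum_sub_distrib, ← Finset.sum_mul, ← Finset.sum_mul, Finset.sum_add_distrib,
          hc1, one_mul]
    _ ≤ ∑ i, hyperbolicEntropy (c i * t) :=
        Finset.sum_le_sum fun i _ =>
          le_hyperbolicEntropy_mul (hc0 i) (le_one_of_sum_eq_one hc0 hc1 i) ht

theorem div_mem_Icc_of_hyperbolicEntropy_eq_sum (hc0 : ∀ i, 0 ≤ c i) (hc1 : ∑ i, c i = 1)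
    {t u : ℝ} (ht : 0 < t) (hu : 0 ≤ u)
    (h : hyperbolicEntropy u = ∑ i, hyperbolicEntropy (c i * t)) :
    u / t ∈ Set.Icc (1 - (∑ i, negMulLog (c i) + 1) / arsinh t) 1 := by
  set K := ∑ i, negMulLog (c i) + 1
  have hu_le : u ≤ t := (strictMonoOn_hyperbolicEntropy.le_iff_le hu ht.le).1
    (h ▸ sum_hyperbolicEntropy_mul_le hc0 hc1 t)
  have harsinh : 0 < arsinh t := arsinh_pos_iff.2 ht
  have hlower : t * arsinh t - K * t ≤ u * arsinh t := calc
    t * arsinh t - K * t ≤ hyperbolicEntropy u := h ▸ le_sum_hyperbolicEntropy_mul hc0 hc1 ht.le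
    _ ≤ u * arsinh u := hyperbolicEntropy_le_mul_arsinh u
    _ ≤ u * arsinh t := mul_le_mul_of_nonneg_left (arsinh_le_arsinh.2 hu_le) hu
  constructor
  · calc 1 - K / arsinh t = (t * arsinh t - K * t) / (t * arsinh t) := by field_simp
      _ ≤ u * arsinh t / (t * arsinh t) := by gcongr
      _ = u / t := mul_div_mul_right _ _ harsinh.ne'
  · exact (div_le_one ht).2 hu_le

theorem tendsto_inv_sum_hyperbolicEntropy_mul_div {ψ : ℝ → ℝ}
    (hψ : ∀ s, 0 ≤ s → 0 ≤ ψ s ∧ hyperbolicEntropy (ψ s) = s)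
    (hc0 : ∀ i, 0 ≤ c i) (hc1 : ∑ i, c i = 1) :
    Tendsto (fun t => ψ (∑ i, hyperbolicEntropy (c i * t)) / t) atTop (nhds 1) := by
  set K := ∑ i, negMulLog (c i) + 1
  have hK : Tendsto (fun t => 1 - K / arsinh t) atTop (nhds 1) := by
    simpa using (tendsto_const_nhds.div_atTop tendsto_arsinh_atTop).const_sub (1 : ℝ)
  have hbounds : ∀ᶠ t in atTop, ψ (∑ i, hyperbolicEntropy (c i * t)) / t ∈
      Set.Icc (1 - K / arsinh t) 1 := by
    filter_upwards [eventually_gt_atTop 0] with t ht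
    obtain ⟨hψ0, hψeq⟩ := hψ _ (Finset.sum_nonneg fun i _ => hyperbolicEntropy_nonneg _)
    exact div_mem_Icc_of_hyperbolicEntropy_eq_sum hc0 hc1 ht hψ0 hψeq
  exact tendsto_of_tendsto_of_tendsto_of_le_of_le' hK tendsto_const_nhds
    (hbounds.mono fun _ h => h.1) (hbounds.mono fun _ h => h.2)

end WeightedSum

theorem stmt7_general {d : ℕ} (ϕinv : ℝ → ℝ)
    (hinv2 : ∀ s : ℝ, 0 ≤ s → 0 ≤ ϕinv s ∧
      ϕinv s * Real.arsinh (ϕinv s) - Real.sqrt ((ϕinv s) ^ 2 + 1) + 1 = s)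
    (β : Fin d → ℝ) (hβ : β ≠ 0) :
    Tendsto (fun η : ℝ =>
        η * ϕinv (∑ i, (β i / η * Real.arsinh (β i / η) - Real.sqrt ((β i / η) ^ 2 + 1) + 1)))
      (nhdsWithin 0 (Set.Ioi 0)) (nhds (∑ i, |β i|)) := by
  set L := ∑ i, |β i|
  have hL : 0 < L := by
    obtain ⟨i, hi⟩ := Function.ne_iff.1 hβ
    exact Finset.sum_pos' (fun j _ => abs_nonneg _) ⟨i, Finset.mem_univ i, abs_pos.2 hi⟩
  have hc1 : ∑ i, |β i| / L = 1 := by rw [← Finset.sum_div, div_self hL.ne']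
  have hlim :=
    ((tendsto_inv_sum_hyperbolicEntropy_mul_div hinv2 (fun i => by positivity) hc1).comp
      (tendsto_inv_nhdsGT_zero.const_mul_atTop hL)).const_mul L
  rw [mul_one] at hlim
  refine hlim.congr' (eventually_mem_nhdsWithin.mono fun η (hη : 0 < η) => ?_)
  have hsum :
      ∑ i, hyperbolicEntropy (|β i| / L * (L * η⁻¹)) = ∑ i, hyperbolicEntropy (β i / η) := by
    refine Finset.sum_congr rfl fun i _ => ?_
    rw [← hyperbolicEntropy_abs (β i / η), abs_div, abs_of_pos hη]
    field_simp
  change L * (ϕinv _ / (L * η⁻¹)) = η * ϕinv (∑ i, hyperbolicEntropy (β i / η))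
  rw [hsum]
  field_simp

theorem stmt7 {d : ℕ} (ϕinv : ℝ → ℝ)
    (hinv1 : ∀ t : ℝ, 0 ≤ t →
      ϕinv (t * Real.arsinh t - Real.sqrt (t ^ 2 + 1) + 1) = t)
    (hinv2 : ∀ s : ℝ, 0 ≤ s → 0 ≤ ϕinv s ∧
      ϕinv s * Real.arsinh (ϕinv s) - Real.sqrt ((ϕinv s) ^ 2 + 1) + 1 = s)
    (β : Fin d → ℝ) (hβ : β ≠ 0) :
    Tendsto (fun η : ℝ =>
        η * ϕinv (∑ i, (β i / η * Real.arsinh (β i / η) - Real.sqrt ((β i / η) ^ 2 + 1) + 1)))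
      (nhdsWithin 0 (Set.Ioi 0)) (nhds (∑ i, |β i|)) :=
  stmt7_general ϕinv hinv2 β hβ
end

section
/- Let ϕ : ℝ → ℝ_{≥0} be even, nonnegative, ϕ(0)=0, differentiable with ϕ' increasing on ℝ, and let φ(β) = ∑ᵢ ϕ(βᵢ). Then for each η > 0, the function h_η(β) = η·ϕ⁻¹(φ(β/η)) has gradient components ∂_k h_η(β) = ϕ'(β_k/η) / ϕ'(ϕ⁻¹(∑ᵢ ϕ(βᵢ/η))) lying in [−1, 1]; in particular the family (h_η)_{η>0} is uniformly Lipschitz. -/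
/-
The partial derivatives come from the chain rule, the derivative of `ϕinv` at `s > 0` being
`1 / ϕ'(ϕinv s)` by the inverse function theorem: `ϕ' > 0` on `(0, ∞)` because `ϕ` is strictly
increasing there and `ϕ'` is monotone. Evenness makes `ϕ'` odd, so `|ϕ' u| = ϕ' |u|`; and
`ϕ (β k / η) ≤ S := ∑ i, ϕ (β i / η)` gives `|β k / η| ≤ ϕinv S`, hence
`|ϕ' (β k / η)| ≤ ϕ' (ϕinv S)`.

For the Lipschitz bound, in a single coordinate `h_η` is `t ↦ η * ϕinv (ϕ (t / η) + c)` with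
`c ≥ 0`, which is 1-Lipschitz by the same derivative bound. Changing the `d` coordinates one at a
time makes `h_η` `d`-Lipschitz for the sup norm, uniformly in `η`.
-/

open Set Function

theorem hasDerivAt_comp_div_const {f : ℝ → ℝ} (hf : Differentiable ℝ f) (η t : ℝ) :
    HasDerivAt (fun t => f (t / η)) (deriv f (t / η) / η) t :=
  ((hf (t / η)).hasDerivAt.comp t ((hasDerivAt_id' t).div_const η)).congr_deriv (by ring)

theorem LipschitzWith.of_forall_update {ι α E : Type*} [Fintype ι] [DecidableEq ι]
    [PseudoMetricSpace α] [PseudoMetricSpace E] {f : (ι → α) → E} {K : NNReal}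
    (hf : ∀ w i, LipschitzWith K fun t => f (update w i t)) :
    LipschitzWith (Fintype.card ι * K) f := by
  refine LipschitzWith.of_dist_le_mul fun x y => ?_
  have hpartial (s : Finset ι) :
      dist (f (s.piecewise x y)) (f y) ≤ K * ∑ i ∈ s, dist (x i) (y i) := by
    induction s using Finset.induction_on with
    | empty => simp
    | insert a s ha ih =>
      rw [Finset.piecewise_insert, Finset.sum_insert ha, mul_add]
      set w := s.piecewise x y
      have hwa : w a = y a := s.piecewise_eq_of_notMem _ _ ha
      calc dist (f (update w a (x a))) (f y)
          ≤ dist (f (update w a (x a))) (f (update w a (y a))) + dist (f w) (f y) := by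
            rw [← hwa, update_eq_self]
            exact dist_triangle _ _ _
        _ ≤ _ := add_le_add ((hf w a).dist_le_mul _ _) ih
  calc dist (f x) (f y) = dist (f (Finset.univ.piecewise x y)) (f y) := by
        rw [Finset.piecewise_univ]
    _ ≤ K * ∑ i, dist (x i) (y i) := hpartial Finset.univ
    _ ≤ K * ∑ _i : ι, dist x y := by
        gcongr with i
        exact dist_le_pi_dist x y i
    _ = Fintype.card ι * K * dist x y := by
        simp only [Finset.sum_const, Finset.card_univ, nsmul_eq_mul]
        ring

theorem pos_of_rightInverse {ϕ ϕinv : ℝ → ℝ} (h0 : ϕ 0 = 0)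
    (hright : ∀ s, 0 ≤ s → 0 ≤ ϕinv s ∧ ϕ (ϕinv s) = s) {s : ℝ} (hs : 0 < s) : 0 < ϕinv s := by
  obtain ⟨hnn, hs'⟩ := hright s hs.le
  refine hnn.lt_of_ne fun h => ?_
  rw [← h, h0] at hs'
  exact hs.ne hs'

namespace Function.Even

section Deriv

variable {f : ℝ → ℝ}

theorem deriv_neg (heven : Function.Even f) (t : ℝ) : deriv f (-t) = -deriv f t := by
  simpa [show (fun x => f (-x)) = f from funext heven] using deriv_comp_neg f (-t)

theorem deriv_zero (heven : Function.Even f) : deriv f 0 = 0 := by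
  have h := heven.deriv_neg 0
  rw [neg_zero] at h
  linarith

theorem deriv_nonneg (heven : Function.Even f) (hmono : Monotone (deriv f)) {t : ℝ}
    (ht : 0 ≤ t) : 0 ≤ deriv f t :=
  heven.deriv_zero ▸ hmono ht

theorem abs_deriv (heven : Function.Even f) (hmono : Monotone (deriv f)) (u : ℝ) :
    |deriv f u| = deriv f |u| := by
  rcases le_total 0 u with hu | hu
  · rw [abs_of_nonneg hu, abs_of_nonneg (heven.deriv_nonneg hmono hu)]
  · have hneg := heven.deriv_nonneg hmono (neg_nonneg.mpr hu)
    rw [heven.deriv_neg] at hneg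
    rw [abs_of_nonpos hu, abs_of_nonpos (neg_nonneg.mp hneg), heven.deriv_neg]

theorem comp_abs (heven : Function.Even f) (u : ℝ) : f |u| = f u := by
  rcases abs_choice u with h | h <;> rw [h]
  exact heven u

theorem monotoneOn_Ici (heven : Function.Even f) (hdiff : Differentiable ℝ f)
    (hmono : Monotone (deriv f)) : MonotoneOn f (Ici 0) :=
  monotoneOn_of_deriv_nonneg (convex_Ici 0) hdiff.continuous.continuousOn
    hdiff.differentiableOn fun _ hx => heven.deriv_nonneg hmono (interior_subset hx)

theorem nonneg (heven : Function.Even f) (hdiff : Differentiable ℝ f)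
    (hmono : Monotone (deriv f)) (h0 : f 0 = 0) (t : ℝ) : 0 ≤ f t := by
  rw [← heven.comp_abs, ← h0]
  exact heven.monotoneOn_Ici hdiff hmono self_mem_Ici (abs_nonneg t) (abs_nonneg t)

end Deriv

section Inverse

variable {ϕ ϕinv : ℝ → ℝ}

theorem strictMonoOn_Ici (heven : Function.Even ϕ) (hdiff : Differentiable ℝ ϕ)
    (hmono : Monotone (deriv ϕ)) (hleft : ∀ t, 0 ≤ t → ϕinv (ϕ t) = t) :
    StrictMonoOn ϕ (Ici 0) :=
  (heven.monotoneOn_Ici hdiff hmono).strictMonoOn_of_injOn (LeftInvOn.injOn hleft)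

theorem pos_of_ne_zero (heven : Function.Even ϕ) (hdiff : Differentiable ℝ ϕ)
    (hmono : Monotone (deriv ϕ)) (h0 : ϕ 0 = 0) (hleft : ∀ t, 0 ≤ t → ϕinv (ϕ t) = t)
    {u : ℝ} (hu : u ≠ 0) : 0 < ϕ u := by
  rw [← heven.comp_abs, ← h0]
  exact heven.strictMonoOn_Ici hdiff hmono hleft self_mem_Ici (abs_nonneg u) (abs_pos.mpr hu)

theorem abs_le_of_le (heven : Function.Even ϕ) (hdiff : Differentiable ℝ ϕ)
    (hmono : Monotone (deriv ϕ)) (hleft : ∀ t, 0 ≤ t → ϕinv (ϕ t) = t) {u v : ℝ}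
    (hv : 0 ≤ v) (h : ϕ u ≤ ϕ v) : |u| ≤ v := by
  rwa [← heven.comp_abs, (heven.strictMonoOn_Ici hdiff hmono hleft).le_iff_le (abs_nonneg u) hv]
    at h

theorem deriv_pos (heven : Function.Even ϕ) (hdiff : Differentiable ℝ ϕ)
    (hmono : Monotone (deriv ϕ)) (h0 : ϕ 0 = 0) (hleft : ∀ t, 0 ≤ t → ϕinv (ϕ t) = t)
    {a : ℝ} (ha : 0 < a) : 0 < deriv ϕ a := by
  obtain ⟨c, hc, hslope⟩ :=
    exists_deriv_eq_slope ϕ ha hdiff.continuous.continuousOn hdiff.differentiableOn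
  have hϕa := heven.pos_of_ne_zero hdiff hmono h0 hleft ha.ne'
  have hc_pos : 0 < deriv ϕ c := by
    rw [hslope, h0, sub_zero, sub_zero]
    positivity
  exact hc_pos.trans_le (hmono hc.2.le)

theorem inv_comp (heven : Function.Even ϕ) (hleft : ∀ t, 0 ≤ t → ϕinv (ϕ t) = t) (u : ℝ) :
    ϕinv (ϕ u) = |u| := by
  rw [← heven.comp_abs]
  exact hleft _ (abs_nonneg u)

theorem continuousAt_inv (heven : Function.Even ϕ) (hdiff : Differentiable ℝ ϕ)
    (hmono : Monotone (deriv ϕ)) (h0 : ϕ 0 = 0) (hleft : ∀ t, 0 ≤ t → ϕinv (ϕ t) = t)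
    (hright : ∀ s, 0 ≤ s → 0 ≤ ϕinv s ∧ ϕ (ϕinv s) = s) {s : ℝ} (hs : 0 < s) :
    ContinuousAt ϕinv s := by
  have hstrict := heven.strictMonoOn_Ici hdiff hmono hleft
  have hmonoInv : MonotoneOn ϕinv (Ioi 0) := fun a ha b hb hab => by
    obtain ⟨ha₀, ha'⟩ := hright a (le_of_lt ha)
    obtain ⟨hb₀, hb'⟩ := hright b (le_of_lt hb)
    rwa [← hstrict.le_iff_le ha₀ hb₀, ha', hb']
  have himage : Ioi 0 ⊆ ϕinv '' Ioi 0 := fun t (ht : 0 < t) =>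
    ⟨ϕ t, heven.pos_of_ne_zero hdiff hmono h0 hleft ht.ne', hleft t ht.le⟩
  exact continuousAt_of_monotoneOn_of_image_mem_nhds hmonoInv (Ioi_mem_nhds hs)
    (Filter.mem_of_superset (Ioi_mem_nhds (pos_of_rightInverse h0 hright hs)) himage)

theorem hasDerivAt_inv (heven : Function.Even ϕ) (hdiff : Differentiable ℝ ϕ)
    (hmono : Monotone (deriv ϕ)) (h0 : ϕ 0 = 0) (hleft : ∀ t, 0 ≤ t → ϕinv (ϕ t) = t)
    (hright : ∀ s, 0 ≤ s → 0 ≤ ϕinv s ∧ ϕ (ϕinv s) = s) {s : ℝ} (hs : 0 < s) :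
    HasDerivAt ϕinv (deriv ϕ (ϕinv s))⁻¹ s :=
  (hdiff _).hasDerivAt.of_local_left_inverse
    (heven.continuousAt_inv hdiff hmono h0 hleft hright hs)
    (heven.deriv_pos hdiff hmono h0 hleft (pos_of_rightInverse h0 hright hs)).ne'
    (Filter.eventually_of_mem (Ioi_mem_nhds hs) fun y hy => (hright y (le_of_lt hy)).2)

theorem abs_deriv_div_deriv_inv_le_one (heven : Function.Even ϕ) (hdiff : Differentiable ℝ ϕ)
    (hmono : Monotone (deriv ϕ)) (h0 : ϕ 0 = 0) (hleft : ∀ t, 0 ≤ t → ϕinv (ϕ t) = t)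
    (hright : ∀ s, 0 ≤ s → 0 ≤ ϕinv s ∧ ϕ (ϕinv s) = s) {s u : ℝ} (hs : 0 < s)
    (hu : ϕ u ≤ s) : |deriv ϕ u / deriv ϕ (ϕinv s)| ≤ 1 := by
  obtain ⟨hnn, hs'⟩ := hright s hs.le
  have hD := heven.deriv_pos hdiff hmono h0 hleft (pos_of_rightInverse h0 hright hs)
  rw [abs_div, abs_of_pos hD, div_le_one hD, heven.abs_deriv hmono]
  exact hmono (heven.abs_le_of_le hdiff hmono hleft hnn (hs'.symm ▸ hu))

theorem lipschitzWith_one_inv_add (heven : Function.Even ϕ) (hdiff : Differentiable ℝ ϕ)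
    (hmono : Monotone (deriv ϕ)) (h0 : ϕ 0 = 0) (hleft : ∀ t, 0 ≤ t → ϕinv (ϕ t) = t)
    (hright : ∀ s, 0 ≤ s → 0 ≤ ϕinv s ∧ ϕ (ϕinv s) = s) {η c : ℝ} (hη : 0 < η) (hc : 0 ≤ c) :
    LipschitzWith 1 fun t => η * ϕinv (ϕ (t / η) + c) := by
  -- At `c = 0` the map is `|t|`, which is not differentiable at `0`.
  rcases hc.eq_or_lt with rfl | hc
  · have habs : (fun t => η * ϕinv (ϕ (t / η) + 0)) = fun t => |t| := by
      funext t
      rw [add_zero, heven.inv_comp hleft, abs_div, abs_of_pos hη, mul_div_cancel₀ _ hη.ne']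
    exact habs ▸ lipschitzWith_one_norm
  have hnn := heven.nonneg hdiff hmono h0
  have hderiv (t : ℝ) : HasDerivAt (fun t => η * ϕinv (ϕ (t / η) + c))
      (deriv ϕ (t / η) / deriv ϕ (ϕinv (ϕ (t / η) + c))) t := by
    have hs : 0 < ϕ (t / η) + c := by linarith [hnn (t / η)]
    have hD := heven.deriv_pos hdiff hmono h0 hleft (pos_of_rightInverse h0 hright hs)
    refine (((heven.hasDerivAt_inv hdiff hmono h0 hleft hright hs).comp t
      ((hasDerivAt_comp_div_const hdiff η t).add_const c)).const_mul η).congr_deriv ?_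
    field_simp
  refine lipschitzWith_of_nnnorm_deriv_le (fun t => (hderiv t).differentiableAt) fun t => ?_
  rw [(hderiv t).deriv, ← NNReal.coe_le_coe, coe_nnnorm, Real.norm_eq_abs, NNReal.coe_one]
  exact heven.abs_deriv_div_deriv_inv_le_one hdiff hmono h0 hleft hright
    (by linarith [hnn (t / η)]) (by linarith)

variable {ι : Type*} [Fintype ι]

theorem hasFDerivAt_inv_sum (heven : Function.Even ϕ) (hdiff : Differentiable ℝ ϕ)
    (hmono : Monotone (deriv ϕ)) (h0 : ϕ 0 = 0) (hleft : ∀ t, 0 ≤ t → ϕinv (ϕ t) = t)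
    (hright : ∀ s, 0 ≤ s → 0 ≤ ϕinv s ∧ ϕ (ϕinv s) = s) {η : ℝ} (hη : η ≠ 0) {β : ι → ℝ}
    (hS : 0 < ∑ i, ϕ (β i / η)) :
    HasFDerivAt (fun b : ι → ℝ => η * ϕinv (∑ i, ϕ (b i / η)))
      (∑ i, (deriv ϕ (β i / η) / deriv ϕ (ϕinv (∑ i, ϕ (β i / η)))) •
        ContinuousLinearMap.proj (R := ℝ) (φ := fun _ : ι => ℝ) i) β := by
  have hD := heven.deriv_pos hdiff hmono h0 hleft (pos_of_rightInverse h0 hright hS)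
  have hsum := HasFDerivAt.fun_sum (u := Finset.univ) fun i _ =>
    (hasDerivAt_comp_div_const hdiff η (β i)).comp_hasFDerivAt β
      (ContinuousLinearMap.proj (R := ℝ) (φ := fun _ : ι => ℝ) i).hasFDerivAt
  refine (((heven.hasDerivAt_inv hdiff hmono h0 hleft hright hS).comp_hasFDerivAt β
    hsum).const_mul η).congr_fderiv ?_
  ext v
  simp only [smul_apply, sum_apply, ContinuousLinearMap.proj_apply, smul_eq_mul, Finset.mul_sum]
  refine Finset.sum_congr rfl fun i _ => ?_
  field_simp

theorem lipschitzWith_inv_sum (heven : Function.Even ϕ) (hdiff : Differentiable ℝ ϕ)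
    (hmono : Monotone (deriv ϕ)) (h0 : ϕ 0 = 0) (hleft : ∀ t, 0 ≤ t → ϕinv (ϕ t) = t)
    (hright : ∀ s, 0 ≤ s → 0 ≤ ϕinv s ∧ ϕ (ϕinv s) = s) {η : ℝ} (hη : 0 < η) :
    LipschitzWith (Fintype.card ι * 1) fun b : ι → ℝ => η * ϕinv (∑ i, ϕ (b i / η)) := by
  classical
  refine LipschitzWith.of_forall_update fun w a => ?_
  have hsplit (t : ℝ) : ∑ i, ϕ (update w a t i / η)
      = ϕ (t / η) + ∑ i ∈ Finset.univ \ {a}, ϕ (w i / η) := by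
    rw [← Finset.sum_update_of_mem (Finset.mem_univ a)]
    exact Finset.sum_congr rfl fun i _ => apply_update (fun _ x => ϕ (x / η)) w a t i
  simp only [hsplit]
  exact heven.lipschitzWith_one_inv_add hdiff hmono h0 hleft hright hη
    (Finset.sum_nonneg fun i _ => heven.nonneg hdiff hmono h0 (w i / η))

end Inverse

end Function.Even

theorem stmt10_general {d : ℕ} (ϕ ϕinv : ℝ → ℝ)
    (heven : ∀ t, ϕ (-t) = ϕ t) (h0 : ϕ 0 = 0)
    (hdiff : Differentiable ℝ ϕ)
    (hderiv_mono : Monotone (deriv ϕ))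
    (hinv1 : ∀ t, 0 ≤ t → ϕinv (ϕ t) = t)
    (hinv2 : ∀ s, 0 ≤ s → 0 ≤ ϕinv s ∧ ϕ (ϕinv s) = s) :
    (∀ η : ℝ, 0 < η → ∀ β : Fin d → ℝ, β ≠ 0 → ∀ k,
      fderiv ℝ (fun b : Fin d → ℝ => η * ϕinv (∑ i, ϕ (b i / η))) β (Pi.single k 1)
        = deriv ϕ (β k / η) / deriv ϕ (ϕinv (∑ i, ϕ (β i / η)))
      ∧ deriv ϕ (β k / η) / deriv ϕ (ϕinv (∑ i, ϕ (β i / η))) ∈ Set.Icc (-1 : ℝ) 1)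
    ∧ ∃ K : NNReal, ∀ η : ℝ, 0 < η →
        LipschitzWith K (fun b : Fin d → ℝ => η * ϕinv (∑ i, ϕ (b i / η))) := by
  have heven : Function.Even ϕ := heven
  refine ⟨fun η hη β hβ k => ?_, _, fun η hη =>
    heven.lipschitzWith_inv_sum hdiff hderiv_mono h0 hinv1 hinv2 hη⟩
  have hnn := heven.nonneg hdiff hderiv_mono h0
  obtain ⟨j, hj⟩ := Function.ne_iff.mp hβ
  have hS : 0 < ∑ i, ϕ (β i / η) := Finset.sum_pos' (fun i _ => hnn _)
    ⟨j, Finset.mem_univ j, heven.pos_of_ne_zero hdiff hderiv_mono h0 hinv1 (div_ne_zero hj hη.ne')⟩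
  constructor
  · rw [(heven.hasFDerivAt_inv_sum hdiff hderiv_mono h0 hinv1 hinv2 hη.ne' hS).fderiv]
    simp [Pi.single_apply]
  · rw [mem_Icc, ← abs_le]
    exact heven.abs_deriv_div_deriv_inv_le_one hdiff hderiv_mono h0 hinv1 hinv2 hS
      (Finset.single_le_sum (fun i _ => hnn (β i / η)) (Finset.mem_univ k))

theorem stmt10 {d : ℕ} (ϕ ϕinv : ℝ → ℝ)
    (heven : ∀ t, ϕ (-t) = ϕ t) (hnn : ∀ t, 0 ≤ ϕ t) (h0 : ϕ 0 = 0)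
    (hdiff : Differentiable ℝ ϕ)
    (hderiv_mono : Monotone (deriv ϕ))
    (hinv1 : ∀ t, 0 ≤ t → ϕinv (ϕ t) = t)
    (hinv2 : ∀ s, 0 ≤ s → 0 ≤ ϕinv s ∧ ϕ (ϕinv s) = s)
    (hinvdiff : DifferentiableOn ℝ ϕinv (Set.Ioi 0)) :
    (∀ η : ℝ, 0 < η → ∀ β : Fin d → ℝ, β ≠ 0 → ∀ k,
      fderiv ℝ (fun b : Fin d → ℝ => η * ϕinv (∑ i, ϕ (b i / η))) β (Pi.single k 1)
        = deriv ϕ (β k / η) / deriv ϕ (ϕinv (∑ i, ϕ (β i / η)))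
      ∧ deriv ϕ (β k / η) / deriv ϕ (ϕinv (∑ i, ϕ (β i / η))) ∈ Set.Icc (-1 : ℝ) 1)
    ∧ ∃ K : NNReal, ∀ η : ℝ, 0 < η →
        LipschitzWith K (fun b : Fin d → ℝ => η * ϕinv (∑ i, ϕ (b i / η))) :=
  stmt10_general ϕ ϕinv heven h0 hdiff hderiv_mono hinv1 hinv2
end
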